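/- Fix n ≥ 1 experts, z ≥ 2 outcomes, and ε > 0. Let F⁽⁰⁾ be an n×z row-stochastic matrix whose i-th row f_i⁽⁰⁾ is expert i's initial opinion. For t ≥ 1 define the weights p_{i,j}⁽ᵗ⁾ = (ε + D(f_i⁽ᵗ⁻¹⁾, f_j⁽ᵗ⁻¹⁾))⁻¹ / Σ_{k=1}^{n} (ε + D(f_i⁽ᵗ⁻¹⁾, f_k⁽ᵗ⁻¹⁾))⁻¹ and the updated opinions f_i⁽ᵗ⁾ = Σ_{j=1}^{n} p_{i,j}⁽ᵗ⁾ · f_j⁽ᵗ⁻¹⁾, where D(f, g) = sqrt( (Σ_{k=1}^{z} (f_k − g_k)²) / z ). Then the sequence t ↦ δ(F⁽ᵗ⁾) is monotonically decreasing: δ(F⁽ᵗ⁾) ≤ δ(F⁽ᵗ⁻¹⁾) for every t ≥ 1, where F⁽ᵗ⁾ is the matrix with rows f_1⁽ᵗ⁾, …, f_n⁽ᵗ⁾ and δ(M) = (1/2) · max_{i,j} Σ_k |M_{i,k} − M_{j,k}|. -/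

import Mathlib

open Finset

/-- A probability vector: nonnegative entries summing to 1. -/
def ProbVec {z : ℕ} (f : Fin z → ℝ) : Prop :=
  (∀ k, 0 ≤ f k) ∧ ∑ k, f k = 1

/-- Root-mean-square deviation between two opinions. -/
noncomputable def D {z : ℕ} (f g : Fin z → ℝ) : ℝ :=
  Real.sqrt ((∑ k, (f k - g k) ^ 2) / z)

/-- The weight that expert `i` assigns to expert `j`, given current opinions `F`:
`p_{i,j} = (ε + D(F i, F j))⁻¹ / Σ_m (ε + D(F i, F m))⁻¹`. -/
noncomputable def weight {n z : ℕ} (ε : ℝ) (F : Fin n → Fin z → ℝ) (i j : Fin n) : ℝ :=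
  (ε + D (F i) (F j))⁻¹ / ∑ m, (ε + D (F i) (F m))⁻¹

/-- The opinions after `t` rounds of the consensual updating process. -/
noncomputable def opinions {n z : ℕ} (ε : ℝ) (F0 : Fin n → Fin z → ℝ) :
    ℕ → Fin n → Fin z → ℝ
  | 0 => F0
  | t + 1 => fun i k => ∑ j, weight ε (opinions ε F0 t) i j * opinions ε F0 t j k

/-- δ(F) = (1/2) · max over pairs of rows i, j of Σ_k |F_{i,k} − F_{j,k}|. -/
noncomputable def delta {n z : ℕ} [NeZero n] (F : Fin n → Fin z → ℝ) : ℝ :=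
  (1 / 2) *
    Finset.univ.sup' Finset.univ_nonempty
      (fun p : Fin n × Fin n => ∑ k, |F p.1 k - F p.2 k|)

/-! The update replaces every row of `F` by a convex combination of the rows of `F`, with
weights in the standard simplex. The difference of two convex combinations `a ⬝ G` and
`b ⬝ G` is `∑ₘ ∑ₗ aₘ bₗ (Gₘ - Gₗ)`, so by the triangle inequality its ℓ¹ norm is at most the
largest ℓ¹ distance between two rows of `G`; hence `δ` cannot increase. -/

theorem weight_mem_stdSimplex {n z : ℕ} [NeZero n] {ε : ℝ} (hε : 0 < ε)
    (F : Fin n → Fin z → ℝ) (i : Fin n) : weight ε F i ∈ stdSimplex ℝ (Fin n) := by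
  have hpos : ∀ m, 0 < (ε + D (F i) (F m))⁻¹ :=
    fun m => inv_pos.mpr (add_pos_of_pos_of_nonneg hε (Real.sqrt_nonneg _))
  have hsum : 0 < ∑ m, (ε + D (F i) (F m))⁻¹ := sum_pos (fun m _ => hpos m) univ_nonempty
  refine ⟨fun j => div_nonneg (hpos j).le hsum.le, ?_⟩
  simp only [weight, ← sum_div, div_self hsum.ne']

section ConvexCombination

variable {ι κ : Type*} [Fintype ι] [Fintype κ] {a b : ι → ℝ}

theorem sum_mul_sub_sum_mul_eq (ha : ∑ m, a m = 1) (hb : ∑ l, b l = 1) (g : ι → ℝ) :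
    ∑ m, a m * g m - ∑ l, b l * g l = ∑ m, ∑ l, a m * b l * (g m - g l) := by
  have hleft : ∑ m, ∑ l, a m * b l * g m = ∑ m, a m * g m := by
    simp only [← sum_mul, ← mul_sum, hb, mul_one]
  have hright : ∑ m, ∑ l, a m * b l * g l = ∑ l, b l * g l := by
    rw [sum_comm]
    simp only [← sum_mul, ha, one_mul]
  simp only [mul_sub, sum_sub_distrib, hleft, hright]

theorem sum_abs_sub_convexComb_le (ha : a ∈ stdSimplex ℝ ι) (hb : b ∈ stdSimplex ℝ ι)
    (G : ι → κ → ℝ) {C : ℝ} (hC : ∀ m l, ∑ k, |G m k - G l k| ≤ C) :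
    ∑ k, |∑ m, a m * G m k - ∑ l, b l * G l k| ≤ C := by
  have hab : ∀ m l, 0 ≤ a m * b l := fun m l => mul_nonneg (ha.1 m) (hb.1 l)
  calc ∑ k, |∑ m, a m * G m k - ∑ l, b l * G l k|
      ≤ ∑ k, ∑ m, ∑ l, a m * b l * |G m k - G l k| := by
        refine sum_le_sum fun k _ => ?_
        rw [sum_mul_sub_sum_mul_eq ha.2 hb.2]
        refine (abs_sum_le_sum_abs _ _).trans (sum_le_sum fun m _ => ?_)
        refine (abs_sum_le_sum_abs _ _).trans (sum_le_sum fun l _ => ?_)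
        rw [abs_mul, abs_of_nonneg (hab m l)]
    _ = ∑ m, ∑ l, a m * b l * ∑ k, |G m k - G l k| := by
        simp only [mul_sum]
        rw [sum_comm]
        exact sum_congr rfl fun m _ => sum_comm
    _ ≤ ∑ m, ∑ l, a m * b l * C :=
        sum_le_sum fun m _ => sum_le_sum fun l _ => mul_le_mul_of_nonneg_left (hC m l) (hab m l)
    _ = C := by simp only [← sum_mul, ← mul_sum, hb.2, mul_one, ha.2, one_mul]

end ConvexCombination

theorem delta_opinions_succ_le {n z : ℕ} [NeZero n] {ε : ℝ} (hε : 0 < ε)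
    (F0 : Fin n → Fin z → ℝ) (s : ℕ) :
    delta (opinions ε F0 (s + 1)) ≤ delta (opinions ε F0 s) := by
  set G := opinions ε F0 s
  refine mul_le_mul_of_nonneg_left (sup'_le _ _ fun p _ => ?_) (by norm_num)
  exact sum_abs_sub_convexComb_le (weight_mem_stdSimplex hε G p.1)
    (weight_mem_stdSimplex hε G p.2) G fun m l =>
      le_sup' (fun p : Fin n × Fin n => ∑ k, |G p.1 k - G p.2 k|) (mem_univ (m, l))

theorem delta_opinions_monotone_general {n z : ℕ} [NeZero n]
    {ε : ℝ} (hε : 0 < ε) (F0 : Fin n → Fin z → ℝ) :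
    ∀ t : ℕ, 1 ≤ t → delta (opinions ε F0 t) ≤ delta (opinions ε F0 (t - 1)) := by
  rintro t ht
  obtain ⟨s, rfl⟩ : ∃ s, t = s + 1 := ⟨t - 1, by omega⟩
  exact delta_opinions_succ_le hε F0 s

theorem delta_opinions_monotone {n z : ℕ} [NeZero n] (hz : 2 ≤ z)
    {ε : ℝ} (hε : 0 < ε) (F0 : Fin n → Fin z → ℝ) (hF0 : ∀ i, ProbVec (F0 i)) :
    ∀ t : ℕ, 1 ≤ t → delta (opinions ε F0 t) ≤ delta (opinions ε F0 (t - 1)) :=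
  delta_opinions_monotone_general hε F0
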